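/- arXiv:2210.07283 — 6 statements merged into one kernel-verified Lean document; each statement's English description precedes it below -/
import Mathlib

section
/- Let $f > 1$ and $p$ be integers. Define polynomials $\mu_0(x) = x - 1$, $\mu_1(x) = p - 2 - x$, and $\mu_j(x) = p - 1 - x$ for $2 \le j \le f-1$, giving an $f$-tuple $\bm\mu$ of linear polynomials. Let $g$ act on $f$-tuples by cyclic shift (the $j$-th entry moves to position $j+1$ mod $f$). Define $\bm\mu^{(0)} = (x, \ldots, x)$ and $\bm\mu^{(k)} = g^{k-1}\bm\mu \circ \bm\mu^{(k-1)}$ for $k \ge 1$, where $\circ$ denotes entrywise composition of polynomials. Let $l = f$ if $f$ is odd and $l = 2f$ if $f$ is even. Then $\bm\mu^{(l)} = (x, x, \ldots, x)$. -/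
/-- Cyclic shift `g` on `f`-tuples of linear polynomials (represented as functions `ℤ → ℤ`),
moving the `j`-th entry of the input to position `j + 1` (indices in `ZMod f`), i.e.
`(g lam) j = lam (j + 1)` — the convention under which the paper's recursion (1) and the
explicit tuples hold. -/
def shiftT {f : ℕ} (lam : ZMod f → ℤ → ℤ) : ZMod f → ℤ → ℤ :=
  fun j => lam (j + 1)

/-- The tuple `μ = (x - 1, p - 2 - x, p - 1 - x, …, p - 1 - x)`. -/
def muT (p : ℤ) (f : ℕ) : ZMod f → ℤ → ℤ :=
  fun j x => if j = 0 then x - 1 else if j = 1 then p - 2 - x else p - 1 - x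

/-- `μ⁽⁰⁾ = (x, …, x)` and `μ⁽ᵏ⁾ = gᵏ⁻¹ μ ∘ μ⁽ᵏ⁻¹⁾` (entrywise composition). -/
def muIter (p : ℤ) (f : ℕ) : ℕ → ZMod f → ℤ → ℤ
  | 0 => fun _ x => x
  | k + 1 => fun j x => (shiftT^[k] (muT p f)) j (muIter p f k j x)

/-- `l = f` if `f` is odd, `l = 2f` if `f` is even. -/
def lVal (f : ℕ) : ℕ := if f % 2 = 1 then f else 2 * f

/-- Helper: apply `μ_{j+a}, μ_{j+a+1}, …, μ_{j+a+m-1}` in order. -/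
def compT (p : ℤ) (f a : ℕ) : ℕ → ZMod f → ℤ → ℤ
  | 0 => fun _ x => x
  | m + 1 => fun j x => muT p f (j + (a : ZMod f) + (m : ZMod f)) (compT p f a m j x)

lemma compT_succ (p : ℤ) (f a m : ℕ) (j : ZMod f) (x : ℤ) :
    compT p f a (m + 1) j x = muT p f (j + (a : ZMod f) + (m : ZMod f)) (compT p f a m j x) :=
  rfl

lemma shift_pow {f : ℕ} (k : ℕ) (lam : ZMod f → ℤ → ℤ) (j : ZMod f) :
    (shiftT^[k] lam) j = lam (j + (k : ZMod f)) := by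
  induction k generalizing j with
  | zero => simp
  | succ k ih =>
    rw [Function.iterate_succ_apply']
    show (shiftT^[k] lam) (j + 1) = _
    rw [ih]
    push_cast
    ring_nf

lemma muIter_eq_comp (p : ℤ) (f : ℕ) (k : ℕ) :
    muIter p f k = compT p f 0 k := by
  induction k with
  | zero => rfl
  | succ k ih =>
    funext j x
    simp only [muIter, compT, shift_pow, ih, Nat.cast_zero, add_zero]

lemma comp_add (p : ℤ) (f : ℕ) (k a m : ℕ) (j : ZMod f) (x : ℤ) :
    compT p f a (m + k) j x = compT p f (a + m) k j (compT p f a m j x) := by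
  induction k with
  | zero => rfl
  | succ k ih =>
    show compT p f a (m + k + 1) j x = _
    simp only [compT, ih]
    congr 1
    push_cast
    ring

lemma comp_period (p : ℤ) (f : ℕ) (m a : ℕ) (j : ZMod f) (x : ℤ) :
    compT p f (a + f) m j x = compT p f a m j x := by
  induction m with
  | zero => rfl
  | succ m ih =>
    simp only [compT, ih]
    congr 2
    push_cast
    simp [ZMod.natCast_self]

lemma shift_index (p : ℤ) (f : ℕ) (m a : ℕ) (j : ZMod f) (x : ℤ) :
    compT p f a m (j + 1) x = compT p f (a + 1) m j x := by
  induction m with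
  | zero => rfl
  | succ m ih =>
    simp only [compT, ih]
    congr 2
    push_cast
    ring

lemma comp_one (p : ℤ) (f : ℕ) (j : ZMod f) (x : ℤ) :
    compT p f 0 1 j x = muT p f j x := by
  simp only [compT]
  norm_num

lemma conj (p : ℤ) (f : ℕ) (j : ZMod f) (x : ℤ) :
    compT p f 0 f (j + 1) (muT p f j x) = muT p f j (compT p f 0 f j x) := by
  rw [shift_index, ← comp_one p f j x, ← comp_add, Nat.add_comm 1 f, comp_add,
    comp_period, comp_one]

lemma muT_surj (p : ℤ) (f : ℕ) (j : ZMod f) (y : ℤ) : ∃ x, muT p f j x = y := by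
  unfold muT
  split_ifs
  · exact ⟨y + 1, by ring⟩
  · exact ⟨p - 2 - y, by ring⟩
  · exact ⟨p - 1 - y, by ring⟩

lemma muT_sub (p : ℤ) (f : ℕ) (j : ZMod f) (c x : ℤ) :
    muT p f j (c - x) = muT p f j c + muT p f j 0 - muT p f j x := by
  unfold muT
  split_ifs <;> ring

lemma baseAux (p : ℤ) (f : ℕ) (hf : 1 < f) :
    ∀ m, m + 2 ≤ f → ∀ x, compT p f 0 (m + 2) (0 : ZMod f) x
      = if Even m then p - 1 - x else x := by
  haveI : NeZero f := ⟨by omega⟩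
  have hne01 : (1 : ZMod f) ≠ 0 := by
    intro h
    have := congrArg ZMod.val h
    rw [← Nat.cast_one, ZMod.val_natCast_of_lt hf, ZMod.val_zero] at this
    omega
  intro m
  induction m with
  | zero =>
    intro _ x
    simp only [compT, Nat.cast_one, Nat.cast_zero, add_zero, zero_add]
    unfold muT
    rw [if_neg hne01, if_pos rfl, if_pos rfl]
    simp only [Even.zero, if_pos]
    ring
  | succ m ih =>
    intro hm x
    have h2 : ((m + 2 : ℕ) : ZMod f) ≠ 0 ∧ ((m + 2 : ℕ) : ZMod f) ≠ 1 := by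
      constructor
      · intro h
        have := congrArg ZMod.val h
        rw [ZMod.val_natCast_of_lt (by omega), ZMod.val_zero] at this
        omega
      · intro h
        have := congrArg ZMod.val h
        rw [ZMod.val_natCast_of_lt (by omega), (by rw [← Nat.cast_one, ZMod.val_natCast_of_lt hf] : (1 : ZMod f).val = 1)] at this
        omega
    show compT p f 0 (m + 2 + 1) 0 x = _
    rw [compT_succ, ih (by omega)]
    rw [Nat.cast_zero, add_zero, zero_add]
    unfold muT
    rw [if_neg h2.1, if_neg h2.2]
    rcases Nat.even_or_odd m with he | ho
    · rw [if_pos he, if_neg (by simp [Nat.even_add_one, he])]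
      ring
    · rw [if_neg (by simpa using ho), if_pos (by simp [Nat.even_add_one]; simpa using ho)]

lemma cycle_odd (p : ℤ) (f : ℕ) (hf : 1 < f) (hodd : f % 2 = 1) :
    ∀ n : ℕ, ∀ x, compT p f 0 f ((n : ZMod f)) x = x := by
  obtain ⟨m, hm⟩ : ∃ m, f = m + 2 := ⟨f - 2, by omega⟩
  have hmo : ¬ Even m := by
    rw [Nat.even_iff]; omega
  intro n
  induction n with
  | zero =>
    intro x
    have := baseAux p f hf m (by omega) x
    rw [if_neg hmo] at this
    rw [Nat.cast_zero]
    rw [hm] at this ⊢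
    exact this
  | succ n ih =>
    intro x
    obtain ⟨y, hy⟩ := muT_surj p f (n : ZMod f) x
    rw [← hy, Nat.cast_succ, conj, ih, hy]

lemma cycle_even (p : ℤ) (f : ℕ) (hf : 1 < f) (heven : f % 2 = 0) :
    ∀ n : ℕ, ∃ c, ∀ x, compT p f 0 f ((n : ZMod f)) x = c - x := by
  obtain ⟨m, hm⟩ : ∃ m, f = m + 2 := ⟨f - 2, by omega⟩
  have hme : Even m := by
    rw [Nat.even_iff]; omega
  intro n
  induction n with
  | zero =>
    refine ⟨p - 1, fun x => ?_⟩
    have := baseAux p f hf m (by omega) x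
    rw [if_pos hme] at this
    rw [Nat.cast_zero]
    rw [hm] at this ⊢
    exact this
  | succ n ih =>
    obtain ⟨c, hc⟩ := ih
    refine ⟨muT p f (n : ZMod f) c + muT p f (n : ZMod f) 0, fun x => ?_⟩
    obtain ⟨y, hy⟩ := muT_surj p f (n : ZMod f) x
    rw [← hy, Nat.cast_succ, conj, hc, muT_sub]

/-- `μ⁽ˡ⁾ = (x, x, …, x)`. -/
theorem muIter_lVal_eq_id (p : ℤ) (f : ℕ) (hf : 1 < f) :
    muIter p f (lVal f) = fun _ x => x := by
  haveI : NeZero f := ⟨by omega⟩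
  funext j x
  obtain ⟨n, rfl⟩ := ZMod.natCast_zmod_surjective j
  unfold lVal
  rcases Nat.even_or_odd f with he | ho
  · rw [if_neg (by rw [Nat.even_iff] at he; omega)]
    rw [muIter_eq_comp]
    have h2 : 2 * f = f + f := by ring
    rw [h2, comp_add, comp_period]
    obtain ⟨c, hc⟩ := cycle_even p f hf (Nat.even_iff.mp he) n
    rw [hc, hc]
    ring
  · rw [if_pos (Nat.odd_iff.mp ho)]
    rw [muIter_eq_comp]
    exact cycle_odd p f hf (Nat.odd_iff.mp ho) n x
end

section
/- With the notation of the cyclic construction (tuples $\bm\mu^{(k)}$ built from $\mu_0(x) = x-1$, $\mu_1(x) = p-2-x$, $\mu_j(x) = p-1-x$ for $j \ge 2$, cyclic shift $g$, and $l = f$ for odd $f$, $l = 2f$ for even $f$), the tuples $\bm\mu^{(1)}, \bm\mu^{(2)}, \ldots, \bm\mu^{(l)}$ are pairwise distinct. -/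
/-- window composition: `nuT d m = μ_{m+d-1} ∘ ⋯ ∘ μ_m` -/
def nuT (p : ℤ) (f : ℕ) : ℕ → ZMod f → ℤ → ℤ
  | 0 => fun _ x => x
  | d + 1 => fun m x => muT p f (m + (d : ℕ)) (nuT p f d m x)

lemma shiftT_iterate {f : ℕ} (n : ℕ) (lam : ZMod f → ℤ → ℤ) (j : ZMod f) :
    (shiftT^[n] lam) j = lam (j + (n : ℕ)) := by
  induction n generalizing lam j with
  | zero => simp
  | succ n ih =>
      rw [Function.iterate_succ_apply, ih]
      simp [shiftT]
      ring_nf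

lemma muIter_succ (p : ℤ) (f : ℕ) (k : ℕ) (j : ZMod f) (x : ℤ) :
    muIter p f (k + 1) j x = muT p f (j + (k : ℕ)) (muIter p f k j x) := by
  show (shiftT^[k] (muT p f)) j (muIter p f k j x) = _
  rw [shiftT_iterate]

lemma muIter_add (p : ℤ) (f : ℕ) (d k : ℕ) (j : ZMod f) (x : ℤ) :
    muIter p f (k + d) j x = nuT p f d (j + (k : ℕ)) (muIter p f k j x) := by
  induction d with
  | zero => rfl
  | succ d ih =>
      have : k + (d + 1) = (k + d) + 1 := by ring
      rw [this, muIter_succ, ih]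
      show muT p f (j + ((k + d : ℕ) : ZMod f)) _ = muT p f ((j + (k : ℕ)) + (d : ℕ)) _
      push_cast
      ring_nf

lemma muT_surj_s1 (p : ℤ) (f : ℕ) (i : ZMod f) : Function.Surjective (muT p f i) := by
  intro y
  unfold muT
  split_ifs
  · exact ⟨y + 1, by ring⟩
  · exact ⟨p - 2 - y, by ring⟩
  · exact ⟨p - 1 - y, by ring⟩

lemma muIter_surj (p : ℤ) (f : ℕ) (k : ℕ) (j : ZMod f) :
    Function.Surjective (muIter p f k j) := by
  induction k with
  | zero => exact fun y => ⟨y, rfl⟩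
  | succ k ih =>
      intro y
      obtain ⟨z, hz⟩ := muT_surj_s1 p f (j + (k : ℕ)) y
      obtain ⟨x, hx⟩ := ih z
      exact ⟨x, by rw [muIter_succ, hx, hz]⟩

section casts
variable {f : ℕ}

lemma cast_ne_zero' (hf : 1 < f) {n : ℕ} (h0 : 0 < n) (h1 : n < f) : (n : ZMod f) ≠ 0 := by
  haveI : NeZero f := ⟨by omega⟩
  intro h
  rw [ZMod.natCast_eq_zero_iff] at h
  exact absurd (Nat.le_of_dvd h0 h) (by omega)

lemma cast_ne_one' (hf : 1 < f) {n : ℕ} (h0 : 2 ≤ n) (h1 : n < f) : (n : ZMod f) ≠ 1 := by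
  intro h
  have : ((n - 1 : ℕ) : ZMod f) = 0 := by
    have hn : n = (n - 1) + 1 := by omega
    rw [hn] at h
    push_cast at h ⊢
    linear_combination h
  exact cast_ne_zero' hf (n := n - 1) (by omega) (by omega) this

end casts

lemma muT_one (p : ℤ) {f : ℕ} (hf : 1 < f) (x : ℤ) : muT p f 1 x = p - 2 - x := by
  haveI : Fact (1 < f) := ⟨hf⟩
  simp [muT, one_ne_zero]

lemma muT_zero (p : ℤ) (f : ℕ) (x : ℤ) : muT p f 0 x = x - 1 := by simp [muT]

lemma muT_big (p : ℤ) {f : ℕ} {i : ZMod f} (h0 : i ≠ 0) (h1 : i ≠ 1) (x : ℤ) :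
    muT p f i x = p - 1 - x := by simp [muT, h0, h1]

/-- small window: for `1 ≤ d ≤ f-1`, `nuT d 1 = p-2-x` (d odd) or `x+1` (d even). -/
lemma nu_small (p : ℤ) {f : ℕ} (hf : 1 < f) :
    ∀ d, 1 ≤ d → d ≤ f - 1 → ∀ x,
      nuT p f d 1 x = if d % 2 = 1 then p - 2 - x else x + 1 := by
  intro d
  induction d with
  | zero => omega
  | succ d ih =>
      intro _ hle x
      rcases Nat.eq_zero_or_pos d with hd0 | hd0
      · subst hd0
        show muT p f (1 + ((0 : ℕ) : ZMod f)) (nuT p f 0 1 x) = _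
        simp [muT_one p hf, nuT]
      · have hih := ih hd0 (by omega) x
        show muT p f (1 + (d : ℕ)) (nuT p f d 1 x) = _
        have hcast : (1 : ZMod f) + (d : ℕ) = ((d + 1 : ℕ) : ZMod f) := by push_cast; ring
        have h0 : ((d + 1 : ℕ) : ZMod f) ≠ 0 := cast_ne_zero' hf (by omega) (by omega)
        have h1 : ((d + 1 : ℕ) : ZMod f) ≠ 1 := cast_ne_one' hf (by omega) (by omega)
        rw [hcast, muT_big p h0 h1, hih]
        rcases Nat.even_or_odd d with he | ho
        · have : d % 2 = 0 := Nat.even_iff.mp he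
          have : ¬ (d % 2 = 1) := by omega
          rw [if_neg this, if_pos (by omega)]
          ring
        · have h2 : d % 2 = 1 := Nat.odd_iff.mp ho
          rw [if_pos h2, if_neg (by omega)]
          ring

/-- `f` even: `nuT f 1 x = p - 3 - x`. -/
lemma nu_f (p : ℤ) {f : ℕ} (hf : 1 < f) (hfe : f % 2 = 0) (x : ℤ) :
    nuT p f f 1 x = p - 3 - x := by
  haveI : NeZero f := ⟨by omega⟩
  have hstep : nuT p f ((f - 1) + 1) 1 x
      = muT p f (1 + ((f - 1 : ℕ) : ZMod f)) (nuT p f (f - 1) 1 x) := rfl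
  have hf1 : (f - 1) + 1 = f := by omega
  rw [hf1] at hstep
  rw [hstep]
  have hcast : (1 : ZMod f) + ((f - 1 : ℕ) : ZMod f) = 0 := by
    have : ((f : ℕ) : ZMod f) = 0 := ZMod.natCast_self f
    calc (1 : ZMod f) + ((f - 1 : ℕ) : ZMod f) = (((f - 1) + 1 : ℕ) : ZMod f) := by
          push_cast; ring
      _ = 0 := by rw [hf1, ZMod.natCast_self]
  rw [hcast, muT_zero, nu_small p hf (f - 1) (by omega) (le_refl _) x,
    if_pos (by omega)]
  ring

/-- `f` even: for `1 ≤ s ≤ f-1`, `nuT (f+s) 1 = x+1` (s odd) or `p-2-x` (s even). -/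
lemma nu_large (p : ℤ) {f : ℕ} (hf : 1 < f) (hfe : f % 2 = 0) :
    ∀ s, 1 ≤ s → s ≤ f - 1 → ∀ x,
      nuT p f (f + s) 1 x = if s % 2 = 1 then x + 1 else p - 2 - x := by
  intro s
  induction s with
  | zero => omega
  | succ s ih =>
      intro _ hle x
      rcases Nat.eq_zero_or_pos s with hs0 | hs0
      · subst hs0
        show muT p f (1 + ((f + 0 : ℕ) : ZMod f)) (nuT p f (f + 0) 1 x) = _
        have hcast : (1 : ZMod f) + ((f + 0 : ℕ) : ZMod f) = 1 := by
          push_cast [ZMod.natCast_self]; ring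
        rw [hcast, muT_one p hf]
        have := nu_f p hf hfe x
        simp only [Nat.add_zero]
        rw [this]
        norm_num
        ring
      · have hih := ih hs0 (by omega) x
        show muT p f (1 + ((f + s : ℕ) : ZMod f)) (nuT p f (f + s) 1 x) = _
        have hcast : (1 : ZMod f) + ((f + s : ℕ) : ZMod f) = ((s + 1 : ℕ) : ZMod f) := by
          push_cast [ZMod.natCast_self]; ring
        have h0 : ((s + 1 : ℕ) : ZMod f) ≠ 0 := cast_ne_zero' hf (by omega) (by omega)
        have h1 : ((s + 1 : ℕ) : ZMod f) ≠ 1 := cast_ne_one' hf (by omega) (by omega)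
        rw [hcast, muT_big p h0 h1, hih]
        rcases Nat.even_or_odd s with he | ho
        · have h2 : s % 2 = 0 := Nat.even_iff.mp he
          rw [if_neg (by omega), if_pos (by omega)]
          ring
        · have h2 : s % 2 = 1 := Nat.odd_iff.mp ho
          rw [if_pos h2, if_neg (by omega)]
          ring

/-- the tuples `μ⁽¹⁾, …, μ⁽ˡ⁾` are pairwise distinct. -/
theorem muIter_pairwise_distinct (p : ℤ) (f : ℕ) (hf : 1 < f) (hp : 3 < p) :
    ∀ k₁ k₂ : ℕ, 1 ≤ k₁ → k₁ < k₂ → k₂ ≤ lVal f →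
      muIter p f k₁ ≠ muIter p f k₂ := by
  intro k₁ k₂ hk1 hk12 hk2 heq
  set d := k₂ - k₁ with hd
  have hd1 : 1 ≤ d := by omega
  have hk2' : k₂ = k₁ + d := by omega
  set j : ZMod f := 1 - (k₁ : ℕ) with hj
  obtain ⟨x₀, hx₀⟩ := muIter_surj p f k₁ j 0
  have h := congrFun (congrFun heq j) x₀
  rw [hk2', muIter_add, hx₀] at h
  have hjk : j + ((k₁ : ℕ) : ZMod f) = 1 := by rw [hj]; ring
  rw [hjk] at h
  -- h : 0 = nuT p f d 1 0
  have hval : nuT p f d 1 0 ≠ 0 := by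
    by_cases hodd : f % 2 = 1
    · have hl : lVal f = f := by simp [lVal, hodd]
      have hdle : d ≤ f - 1 := by omega
      rw [nu_small p hf d hd1 hdle 0]
      split_ifs <;> omega
    · have hfe : f % 2 = 0 := by omega
      have hl : lVal f = 2 * f := by simp [lVal, hodd]
      have hdle : d ≤ 2 * f - 1 := by omega
      rcases lt_trichotomy d f with hc | hc | hc
      · rw [nu_small p hf d hd1 (by omega) 0]
        split_ifs <;> omega
      · rw [hc, nu_f p hf hfe 0]; omega
      · have hs : d = f + (d - f) := by omega
        rw [hs, nu_large p hf hfe (d - f) (by omega) (by omega) 0]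
        split_ifs <;> omega
  exact hval h.symm
end

section
/- Let $f > 1$, let $g$ be the cyclic shift on $(\mathbb{Z}/2\mathbb{Z})^f$, and let $\bm m = (0, 1, 1, \ldots, 1) \in (\mathbb{Z}/2\mathbb{Z})^f$. Define $\bm m^{(k)} = \sum_{j=0}^{k-1} g^j \bm m$ for $k \ge 1$. Let $l = f$ if $f$ is odd and $l = 2f$ if $f$ is even. Then $\bm m^{(k)} \ne (0, 0, \ldots, 0)$ for all $1 \le k < l$, and $\bm m^{(l)} = (0, 0, \ldots, 0)$. -/
/-- Cyclic shift `g` on `(ℤ/2)^f`: `(g m) j = m (j + 1)`. -/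
def shift2 {f : ℕ} (m : ZMod f → ZMod 2) : ZMod f → ZMod 2 :=
  fun j => m (j + 1)

/-- The vector `m = (0, 1, 1, …, 1) ∈ (ℤ/2)^f`. -/
def mBase (f : ℕ) : ZMod f → ZMod 2 :=
  fun j => if j = 0 then 0 else 1

/-- `m⁽ᵏ⁾ = ∑_{j=0}^{k-1} gʲ m`. -/
def mVec (f : ℕ) (k : ℕ) : ZMod f → ZMod 2 :=
  fun j => ∑ i ∈ Finset.range k, shift2^[i] (mBase f) j

lemma shift2_iter {f : ℕ} (m : ZMod f → ZMod 2) (i : ℕ) (j : ZMod f) :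
    shift2^[i] m j = m (j + i) := by
  induction i generalizing m j with
  | zero => simp
  | succ n ih =>
      rw [Function.iterate_succ_apply, ih]
      simp [shift2]
      ring_nf

lemma cast_mod_two (k : ℕ) : (k : ZMod 2) = ((k % 2 : ℕ) : ZMod 2) := by
  rw [ZMod.natCast_mod]

lemma mVec_eq (f k : ℕ) [NeZero f] (j : ZMod f) :
    mVec f k j = (k : ZMod 2) +
      (((Finset.range k).filter (fun i => i % f = (-j).val)).card : ZMod 2) := by
  have key : ∀ i : ℕ, (j + (i : ZMod f) = 0) ↔ i % f = (-j).val := by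
    intro i
    rw [add_eq_zero_iff_neg_eq, eq_comm, ← ZMod.val_natCast]
    constructor
    · intro h; rw [h]
    · intro h; exact ZMod.val_injective f h
  unfold mVec
  simp only [shift2_iter, mBase]
  have h1 : ∀ i : ℕ, (if (j + (i : ZMod f)) = 0 then (0 : ZMod 2) else 1)
      = 1 + (if (j + (i : ZMod f)) = 0 then (1 : ZMod 2) else 0) := by
    intro i
    split_ifs <;> decide
  rw [Finset.sum_congr rfl (fun i _ => h1 i), Finset.sum_add_distrib]
  have h2 : (Finset.range k).filter (fun i : ℕ => j + (i : ZMod f) = 0)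
      = (Finset.range k).filter (fun i : ℕ => i % f = (-j).val) :=
    Finset.filter_congr (fun i _ => by rw [key i])
  rw [Finset.sum_boole, h2]
  simp

lemma count_le {k r f : ℕ} (hk : k ≤ f) (hr : r < f) :
    ((Finset.range k).filter (fun i => i % f = r)).card = if r < k then 1 else 0 := by
  have : (Finset.range k).filter (fun i => i % f = r)
      = (Finset.range k).filter (fun i => i = r) := by
    apply Finset.filter_congr
    intro i hi
    rw [Finset.mem_range] at hi
    rw [Nat.mod_eq_of_lt (lt_of_lt_of_le hi hk)]
  rw [this, Finset.filter_eq']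
  split_ifs with h1 h2 h2 <;> simp_all [Finset.mem_range]

lemma count_two {k r f : ℕ} (hfk : f < k) (hk2 : k ≤ 2 * f) (hr : r < f) :
    ((Finset.range k).filter (fun i => i % f = r)).card
      = if r + f < k then 2 else 1 := by
  have hkey : (Finset.range k).filter (fun i => i % f = r)
      = (Finset.range k).filter (fun i => i = r ∨ i = r + f) := by
    apply Finset.filter_congr
    intro i hi
    rw [Finset.mem_range] at hi
    rcases lt_or_ge i f with h | h
    · rw [Nat.mod_eq_of_lt h]; omega
    · rw [Nat.mod_eq_sub_mod h, Nat.mod_eq_of_lt (by omega)]; omega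
  rw [hkey]
  split_ifs with h
  · have : (Finset.range k).filter (fun i => i = r ∨ i = r + f) = {r, r + f} := by
      ext i
      simp only [Finset.mem_filter, Finset.mem_range, Finset.mem_insert,
        Finset.mem_singleton]
      omega
    rw [this, Finset.card_insert_of_notMem (by simp; omega), Finset.card_singleton]
  · have : (Finset.range k).filter (fun i => i = r ∨ i = r + f) = {r} := by
      ext i
      simp only [Finset.mem_filter, Finset.mem_range, Finset.mem_singleton]
      omega
    rw [this, Finset.card_singleton]

lemma val_neg_neg (f : ℕ) [NeZero f] {r : ℕ} (hr : r < f) :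
    (-(-(r : ZMod f))).val = r := by
  rw [neg_neg, ZMod.val_natCast, Nat.mod_eq_of_lt hr]

/-- `m⁽ᵏ⁾ ≠ 0` for `1 ≤ k < l`, and `m⁽ˡ⁾ = 0`. -/
theorem mVec_ne_zero_and_mVec_lVal_eq_zero (f : ℕ) (hf : 1 < f) :
    (∀ k : ℕ, 1 ≤ k → k < lVal f → mVec f k ≠ fun _ => 0) ∧
    mVec f (lVal f) = fun _ => 0 := by
  haveI : NeZero f := ⟨by omega⟩
  have hone : (1 : ZMod 2) ≠ 0 := by decide
  constructor
  · intro k hk hkl h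
    -- pick a residue r with the right count parity
    have main : ∀ r : ℕ, r < f →
        mVec f k (-(r : ZMod f)) = (k : ZMod 2) +
          (((Finset.range k).filter (fun i => i % f = r)).card : ZMod 2) := by
      intro r hr
      rw [mVec_eq, val_neg_neg f hr]
    rcases le_or_gt k f with hkf | hkf
    · rcases Nat.even_or_odd k with he | ho
      · -- k even: use r = 0, count 1
        have h0 : mVec f k (-((0 : ℕ) : ZMod f)) = 0 := by rw [h]
        rw [main 0 (by omega), count_le hkf (by omega), if_pos (by omega)] at h0
        rw [cast_mod_two k, Nat.even_iff.mp he] at h0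
        simp at h0
      · -- k odd: then k < f; use r = k, count 0
        have hklt : k < f := by
          rcases Nat.lt_or_ge k f with h' | h'
          · exact h'
          · exfalso
            have : k = f := le_antisymm hkf h'
            subst this
            unfold lVal at hkl
            rw [if_pos (Nat.odd_iff.mp ho)] at hkl
            omega
        have h0 : mVec f k (-(k : ZMod f)) = 0 := by rw [h]
        rw [main k hklt, count_le hkf (by omega), if_neg (by omega)] at h0
        rw [cast_mod_two k, Nat.odd_iff.mp ho] at h0
        simp at h0
    · -- f < k < lVal f = 2f (f even)
      have hfe : f % 2 = 0 := by
        by_contra h'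
        unfold lVal at hkl
        rw [if_pos (by omega)] at hkl
        omega
      have hk2 : k ≤ 2 * f := by
        unfold lVal at hkl
        rw [if_neg (by omega)] at hkl
        omega
      rcases Nat.even_or_odd k with he | ho
      · -- k even: r = f - 1, count 1 (since r + f = 2f-1 ≥ k)
        have h0 : mVec f k (-((f - 1 : ℕ) : ZMod f)) = 0 := by rw [h]
        rw [main (f - 1) (by omega), count_two hkf hk2 (by omega),
          if_neg (by unfold lVal at hkl; rw [if_neg (by omega)] at hkl; omega)] at h0
        rw [cast_mod_two k, Nat.even_iff.mp he] at h0
        simp at h0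
      · -- k odd: r = 0, count 2
        have h0 : mVec f k (-((0 : ℕ) : ZMod f)) = 0 := by rw [h]
        rw [main 0 (by omega), count_two hkf hk2 (by omega), if_pos (by omega)] at h0
        rw [cast_mod_two k, Nat.odd_iff.mp ho] at h0
        simp at h0
        exact absurd h0 (by decide)
  · funext j
    have hr : (-j).val < f := ZMod.val_lt _
    rcases Nat.even_or_odd f with he | ho
    · have he' : f % 2 = 0 := Nat.even_iff.mp he
      have : lVal f = 2 * f := by unfold lVal; rw [if_neg (by omega)]
      have hc := count_two (f := f) (k := 2 * f) (r := (-j).val) (by omega) (le_refl _) hr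
      rw [this, mVec_eq, hc, if_pos (by omega)]
      rw [cast_mod_two (2 * f), Nat.mul_mod_right]
      simp
      decide
    · have : lVal f = f := by unfold lVal; rw [if_pos (Nat.odd_iff.mp ho)]
      have hc := count_le (f := f) (k := f) (r := (-j).val) (le_refl _) hr
      rw [this, mVec_eq, hc, if_pos hr]
      rw [cast_mod_two f, Nat.odd_iff.mp ho]
      decide
end

section
/- Let $f > 1$ be odd and $p > 3$. For each $0 \le j \le f-1$ and any integer $r_j$, with $\mu_j^{(k)}$ defined by the recursion $\mu_j^{(k)}(x) = \mu_j^{(k-1)}(x) - 1$ if $j \equiv 1-k \pmod f$, $\mu_j^{(k)}(x) = p - 2 - \mu_j^{(k-1)}(x)$ if $j \equiv 2-k \pmod f$, and $\mu_j^{(k)}(x) = p - 1 - \mu_j^{(k-1)}(x)$ otherwise, starting from $\mu_j^{(0)}(x) = x$, the sum $\sum_{k} \mu_j^{(k)}(r_j)$ over $f$ consecutive values of $k$ forming a full cycle (e.g. $k = 1-j, 2-j, \ldots, f-j$ taken mod $f$ in $\{0, \ldots, f-1\}$ with the appropriate offset as in the paper) is independent of $r_j$ and equals $\frac{f-1}{2}(p-1)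 - 1$. -/
section Aux

lemma mod2f (f n : ℕ) (hn : n < 2*f) : n % f = if n < f then n else n - f := by
  split_ifs with h
  · exact Nat.mod_eq_of_lt h
  · rw [Nat.mod_eq_sub_mod (by omega), Nat.mod_eq_of_lt (by omega)]

lemma shiftT_iter (f : ℕ) (k : ℕ) : ∀ (lam : ZMod f → ℤ → ℤ) (j : ZMod f),
    (shiftT^[k] lam) j = lam (j + (k : ZMod f)) := by
  induction k with
  | zero => intro lam j; simp
  | succ k ih =>
    intro lam j
    rw [Function.iterate_succ_apply, ih]
    show lam (j + (k : ZMod f) + 1) = _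
    congr 1
    push_cast
    ring

lemma muIter_step (p : ℤ) (f : ℕ) (hf : 1 < f) (j : ℕ) (hj : j < f) (k : ℕ) (hk : k < f)
    (r : ℤ) :
    muIter p f (k+1) (j : ZMod f) r =
      if j + k = 0 ∨ j + k = f then muIter p f k (j : ZMod f) r - 1
      else if j + k = 1 ∨ j + k = f + 1 then p - 2 - muIter p f k (j : ZMod f) r
      else p - 1 - muIter p f k (j : ZMod f) r := by
  have h1 : muIter p f (k+1) (j : ZMod f) r
      = muT p f ((j : ZMod f) + (k : ZMod f)) (muIter p f k (j : ZMod f) r) := by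
    simp only [muIter]
    rw [shiftT_iter]
  rw [h1, show ((j : ZMod f) + (k : ZMod f)) = (((j + k : ℕ)) : ZMod f) by push_cast; ring]
  have h0 : ((((j + k : ℕ)) : ZMod f) = 0) ↔ (j + k = 0 ∨ j + k = f) := by
    rw [← Nat.cast_zero, ZMod.natCast_eq_natCast_iff]
    unfold Nat.ModEq
    rw [Nat.zero_mod, mod2f f (j+k) (by omega)]
    split_ifs <;> omega
  have h1' : ((((j + k : ℕ)) : ZMod f) = 1) ↔ (j + k = 1 ∨ j + k = f + 1) := by
    rw [← Nat.cast_one, ZMod.natCast_eq_natCast_iff]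
    unfold Nat.ModEq
    rw [Nat.mod_eq_of_lt hf, mod2f f (j+k) (by omega)]
    split_ifs <;> omega
  unfold muT
  simp only [h0, h1']

/-- Closed form for `muIter` along one cycle. -/
def G (p : ℤ) (f j k : ℕ) (r : ℤ) : ℤ :=
  if j = 0 then
    if k = 0 then r
    else if k = 1 then r - 1
    else if k % 2 = 0 then p - 1 - r else r
  else if j = 1 then
    if k = 0 ∨ k = f then r
    else if k % 2 = 1 then p - 2 - r else r + 1
  else
    if k = 0 then r
    else if k ≤ f - j then (if k % 2 = 1 then p - 1 - r else r)
    else if k = f - j + 1 then (if k % 2 = 1 then r - 1 else p - 2 - r)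
    else (if k % 2 = 0 then p - 1 - r else r)

set_option maxHeartbeats 8000000 in
lemma muIter_eq_G (p : ℤ) (f : ℕ) (hf : 1 < f) (hodd : f % 2 = 1) (j : ℕ) (hj : j < f)
    (r : ℤ) : ∀ k, k ≤ f → muIter p f k (j : ZMod f) r = G p f j k r := by
  intro k
  induction k with
  | zero =>
    intro _
    show r = G p f j 0 r
    unfold G
    split_ifs <;> omega
  | succ k ih =>
    intro hk
    rw [muIter_step p f hf j hj k (by omega) r, ih (by omega)]
    unfold G
    split_ifs <;>
      first
        | omega
        | exact (‹False›).elim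
        | (rcases ‹False ∨ _› with hFF | hFF <;> first | exact hFF.elim | omega)
        | (rcases ‹_ ∨ False› with hFF | hFF <;> first | omega | exact hFF.elim)

lemma muIter_zero (p : ℤ) (f : ℕ) (j : ZMod f) (r : ℤ) : muIter p f 0 j r = r := rfl

lemma muIter_full (p : ℤ) (f : ℕ) (hf : 1 < f) (hodd : f % 2 = 1) (j : ℕ) (hj : j < f)
    (r : ℤ) : muIter p f f (j : ZMod f) r = r := by
  rw [muIter_eq_G p f hf hodd j hj r f le_rfl]
  unfold G
  split_ifs <;> omega

end Aux

/-- for odd `f > 1` and `p > 3`, for each `j < f` and any integer `r`, the sum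
`∑ₖ μⱼ⁽ᵏ⁾(r)` over the `f - 1` consecutive values `k = 1 - j, 2 - j, …, f - 1 - j`
(taken mod `f`) is independent of `r` and equals `((f-1)/2)(p-1) - 1`. -/
theorem mu_cycle_sum_odd (p : ℤ) (f : ℕ) (hf : 1 < f) (hodd : Odd f) (hp : 3 < p)
    (j : ℕ) (hj : j < f) (r : ℤ) :
    ∑ i ∈ Finset.range (f - 1), muIter p f ((f + 1 + i - j) % f) (j : ZMod f) r
      = (((f - 1) / 2 : ℕ) : ℤ) * (p - 1) - 1 := by
  have hodd' : f % 2 = 1 := Nat.odd_iff.mp hodd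
  set m : ℕ → ℤ := fun k => muIter p f k (j : ZMod f) r with hm
  -- the two special positions
  obtain ⟨k0, k1, hk0f, hk1f, hiff0, hiff1, hk0val⟩ :
      ∃ k0 k1 : ℕ, k0 < f ∧ k1 < f ∧
        (∀ k, k < f → ((j + k = 0 ∨ j + k = f) ↔ k = k0)) ∧
        (∀ k, k < f → ((j + k = 1 ∨ j + k = f + 1) ↔ k = k1)) ∧
        ((j = 0 ∧ k0 = 0) ∨ (1 ≤ j ∧ k0 = f - j)) := by
    by_cases hj0 : j = 0
    · exact ⟨0, 1, by omega, by omega, fun k hk => by omega, fun k hk => by omega, by omega⟩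
    · by_cases hj1 : j = 1
      · exact ⟨f - 1, 0, by omega, by omega, fun k hk => by omega, fun k hk => by omega,
          by omega⟩
      · exact ⟨f - j, f + 1 - j, by omega, by omega, fun k hk => by omega,
          fun k hk => by omega, by omega⟩
  have hne : k0 ≠ k1 := by
    intro h
    have h0 := (hiff0 k0 hk0f).mpr rfl
    have h1 := (hiff1 k0 (by omega)).mpr h
    omega
  -- pair identity
  have pair : ∀ k, k < f → m k + m (k+1)
      = (p - 1) + ((if k = k0 then 2 * m k - p else 0) + (if k = k1 then (-1:ℤ) else 0)) := by
    intro k hk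
    have hstep := muIter_step p f hf j hj k hk r
    show m k + muIter p f (k+1) (j : ZMod f) r = _
    rw [hstep]
    by_cases h0 : k = k0
    · rw [if_pos ((hiff0 k hk).mpr h0), if_pos h0, if_neg (by omega : ¬ k = k1)]
      show m k + (m k - 1) = _
      ring
    · rw [if_neg (fun hc => h0 ((hiff0 k hk).mp hc)), if_neg h0]
      by_cases h1 : k = k1
      · rw [if_pos ((hiff1 k hk).mpr h1), if_pos h1]
        show m k + (p - 2 - m k) = _
        ring
      · rw [if_neg (fun hc => h1 ((hiff1 k hk).mp hc)), if_neg h1]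
        show m k + (p - 1 - m k) = _
        ring
  -- sum of pairs, two ways
  have hsum2 : ∑ k ∈ Finset.range f, (m k + m (k+1))
      = (f : ℤ) * (p - 1) + (2 * m k0 - p) + (-1) := by
    rw [Finset.sum_congr rfl (fun k hk => pair k (Finset.mem_range.mp hk)),
      Finset.sum_add_distrib, Finset.sum_add_distrib, Finset.sum_const, Finset.card_range,
      Finset.sum_ite_eq' (Finset.range f) k0 (fun k => 2 * m k - p),
      Finset.sum_ite_eq' (Finset.range f) k1 (fun _ => (-1:ℤ)),
      if_pos (Finset.mem_range.mpr hk0f), if_pos (Finset.mem_range.mpr hk1f)]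
    push_cast
    ring
  have htel : ∑ k ∈ Finset.range f, (m k + m (k+1))
      = 2 * (∑ k ∈ Finset.range f, m k) := by
    rw [Finset.sum_add_distrib]
    have h1 := Finset.sum_range_succ' m f
    have h2 := Finset.sum_range_succ m f
    have hmf : m f = r := muIter_full p f hf hodd' j hj r
    have hm0 : m 0 = r := rfl
    rw [h2] at h1
    linarith [h1]
  -- rewrite the goal sum without `%`
  have hgoal : ∑ i ∈ Finset.range (f - 1), muIter p f ((f + 1 + i - j) % f) (j : ZMod f) r
      = (∑ k ∈ Finset.range f, m k) - m k0 := by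
    have hcongr : ∀ i ∈ Finset.range (f - 1),
        muIter p f ((f + 1 + i - j) % f) (j : ZMod f) r
          = m (if f + 1 + i - j < f then f + 1 + i - j else f + 1 + i - j - f) := by
      intro i hi
      have hi' := Finset.mem_range.mp hi
      rw [mod2f f (f + 1 + i - j) (by omega)]
    rw [Finset.sum_congr rfl hcongr]
    rcases hk0val with ⟨hj0, hk00⟩ | ⟨hj1, hk0v⟩
    · -- j = 0
      subst hj0; subst hk00
      have h1 : ∀ i ∈ Finset.range (f - 1),
          m (if f + 1 + i - 0 < f then f + 1 + i - 0 else f + 1 + i - 0 - f) = m (i + 1) := by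
        intro i hi
        have hi' := Finset.mem_range.mp hi
        rw [if_neg (by omega)]
        congr 1
        omega
      rw [Finset.sum_congr rfl h1]
      rw [show f = (f - 1) + 1 by omega, Finset.sum_range_succ' m (f - 1)]
      have hm0 : m 0 = r := rfl
      simp only [show (f - 1) + 1 - 1 = f - 1 by omega]
      ring
    · -- 1 ≤ j
      subst hk0v
      have hsplit : ∑ i ∈ Finset.range (f - 1),
          m (if f + 1 + i - j < f then f + 1 + i - j else f + 1 + i - j - f)
          = (∑ i ∈ Finset.Ico 0 (j - 1),
              m (if f + 1 + i - j < f then f + 1 + i - j else f + 1 + i - j - f))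
            + ∑ i ∈ Finset.Ico (j - 1) (f - 1),
              m (if f + 1 + i - j < f then f + 1 + i - j else f + 1 + i - j - f) := by
        rw [Finset.range_eq_Ico,
          ← Finset.sum_Ico_consecutive _ (Nat.zero_le (j - 1)) (by omega : j - 1 ≤ f - 1)]
      rw [hsplit]
      have hblockA : ∑ i ∈ Finset.Ico 0 (j - 1),
          m (if f + 1 + i - j < f then f + 1 + i - j else f + 1 + i - j - f)
          = ∑ i ∈ Finset.Ico (f - j + 1) f, m i := by
        rw [Finset.sum_Ico_eq_sum_range m (f - j + 1) f,
          Finset.sum_Ico_eq_sum_range _ 0 (j - 1)]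
        apply Finset.sum_congr (by congr 1; omega)
        intro i hi
        have hi' := Finset.mem_range.mp hi
        rw [if_pos (by omega)]
        congr 1
        omega
      have hblockB : ∑ i ∈ Finset.Ico (j - 1) (f - 1),
          m (if f + 1 + i - j < f then f + 1 + i - j else f + 1 + i - j - f)
          = ∑ i ∈ Finset.range (f - j), m i := by
        rw [Finset.sum_Ico_eq_sum_range _ (j - 1) (f - 1)]
        apply Finset.sum_congr (by congr 1; omega)
        intro i hi
        have hi' := Finset.mem_range.mp hi
        rw [if_neg (by omega)]
        congr 1
        omega
      have hfull : ∑ k ∈ Finset.range f, m k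
          = (∑ i ∈ Finset.range (f - j), m i) + m (f - j)
            + ∑ i ∈ Finset.Ico (f - j + 1) f, m i := by
        rw [Finset.range_eq_Ico,
          ← Finset.sum_Ico_consecutive m (Nat.zero_le (f - j)) (by omega : f - j ≤ f),
          Finset.sum_eq_sum_Ico_succ_bot (by omega : f - j < f) m, ← Finset.range_eq_Ico]
        ring
      rw [hblockA, hblockB, hfull]
      ring
  rw [hgoal]
  have hT2 : 2 * ((∑ k ∈ Finset.range f, m k) - m k0) = (f : ℤ) * (p - 1) - p - 1 := by
    rw [mul_sub, ← htel, hsum2]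
    ring
  have h2c : (2:ℤ) * (((f - 1) / 2 : ℕ) : ℤ) = (f : ℤ) - 1 := by omega
  have key : 2 * ((∑ k ∈ Finset.range f, m k) - m k0)
      = 2 * ((((f - 1) / 2 : ℕ) : ℤ) * (p - 1) - 1) := by
    rw [hT2]
    linear_combination (1 - p) * h2c
  exact mul_left_cancel₀ (by norm_num : (2:ℤ) ≠ 0) key
end

section
/- Let $f > 1$ be odd and $p > 3$. With the notation of the cyclic construction, the constant term $c$ of the polynomial $e(g^{f-1}\bm\mu) + e(g^{f-2}\bm\mu) + \cdots + e(g\bm\mu) + e(\bm\mu)$ satisfies $c \equiv \frac{p^f - 1}{p - 1} \pmod{p^f - 1}$. -/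
open Classical in
/-- The quantity `e(λ)` of Breuil–Paškūnas evaluated at `x = (x₀, …, x_{f-1})`:
`½ ∑ pʲ(xⱼ - λⱼ(xⱼ))` if `λ_{f-1}(x) ∈ {x, x-1}`, and
`½(pᶠ - 1 + ∑ pʲ(xⱼ - λⱼ(xⱼ)))` otherwise (the division is exact). -/
noncomputable def eP (p : ℤ) (f : ℕ) (lam : ZMod f → ℤ → ℤ) (x : ZMod f → ℤ) : ℤ :=
  if (lam (-1 : ZMod f) = fun t => t) ∨ (lam (-1 : ZMod f) = fun t => t - 1) then
    (∑ j ∈ Finset.range f, p ^ j * (x (j : ZMod f) - lam (j : ZMod f) (x (j : ZMod f)))) / 2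
  else
    (p ^ f - 1 +
      ∑ j ∈ Finset.range f, p ^ j * (x (j : ZMod f) - lam (j : ZMod f) (x (j : ZMod f)))) / 2

lemma shift_apply {f : ℕ} (lam : ZMod f → ℤ → ℤ) (k : ℕ) (j : ZMod f) :
    (shiftT^[k] lam) j = lam (j + (k : ZMod f)) := by
  induction k generalizing lam with
  | zero => simp
  | succ n ih =>
      rw [Function.iterate_succ_apply, ih (shiftT lam)]
      simp only [shiftT]
      congr 1
      push_cast
      ring

lemma sum_ind (f : ℕ) [NeZero f] (w : ℕ → ℤ) (m : ZMod f) :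
    ∑ j ∈ Finset.range f, (if (j : ZMod f) = m then w j else 0) = w m.val := by
  rw [Finset.sum_eq_single m.val]
  · rw [if_pos (ZMod.natCast_rightInverse m)]
  · intro j hj hne
    rw [if_neg]
    intro h
    exact hne (by rw [← ZMod.val_cast_of_lt (Finset.mem_range.mp hj), h])
  · intro h
    exact absurd (Finset.mem_range.mpr (ZMod.val_lt m)) h

lemma muT_term (p : ℤ) (f : ℕ) [Fact (1 < f)] (hp : 3 < p) (k j : ZMod f) :
    (0 : ℤ) - muT p f (j + k) 0
      = (1 - p) + ((if j = -k then p else 0) + (if j = 1 - k then 1 else 0)) := by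
  have h0 : (j = -k) ↔ (j + k = 0) := by
    constructor
    · rintro rfl; ring
    · intro h; linear_combination h
  have h1 : (j = 1 - k) ↔ (j + k = 1) := by
    constructor
    · rintro rfl; ring
    · intro h; linear_combination h
  simp only [muT, h0, h1]
  split_ifs with hA hB hB
  · exact absurd (hA.symm.trans hB) zero_ne_one
  · ring
  · ring
  · ring

lemma sumA (p : ℤ) (f : ℕ) [Fact (1 < f)] (hp : 3 < p) (k : ZMod f) :
    ∑ j ∈ Finset.range f, p ^ j * ((0:ℤ) - muT p f ((j : ZMod f) + k) 0)
      = 1 - p ^ f + p * p ^ ((-k).val) + p ^ ((1 - k).val) := by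
  have : ∀ j ∈ Finset.range f, p ^ j * ((0:ℤ) - muT p f ((j : ZMod f) + k) 0)
      = p ^ j * (1 - p) + ((if (j : ZMod f) = -k then p ^ j * p else 0)
        + (if (j : ZMod f) = 1 - k then p ^ j * 1 else 0)) := by
    intro j _
    rw [muT_term p f hp]
    split_ifs <;> ring
  rw [Finset.sum_congr rfl this, Finset.sum_add_distrib, Finset.sum_add_distrib,
    sum_ind f (fun j => p ^ j * p) (-k), sum_ind f (fun j => p ^ j * 1) (1 - k),
    ← Finset.sum_mul]
  have hg : (∑ j ∈ Finset.range f, p ^ j) * (1 - p) = 1 - p ^ f := by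
    have := geom_sum_mul p f
    linear_combination -this
  rw [hg]
  ring

lemma muT_ne_id (p : ℤ) (f : ℕ) (hp : 3 < p) (m : ZMod f) :
    muT p f m ≠ fun t => t := by
  intro h
  have h0 := congrFun h 0
  simp only [muT] at h0
  split_ifs at h0 <;> omega

lemma muT_eq_iff (p : ℤ) (f : ℕ) (hp : 3 < p) (m : ZMod f) :
    muT p f m = (fun t => t - 1) ↔ m = 0 := by
  constructor
  · intro h
    have h0 := congrFun h 0
    simp only [muT] at h0
    split_ifs at h0 with h1 h2
    · exact h1
    · omega
    · omega
  · rintro rfl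
    funext t
    simp [muT]

lemma key (p : ℤ) (f : ℕ) (hf : 1 < f) (hp : 3 < p) (k : ℕ) (hk : k < f) :
    eP p f (shiftT^[k] (muT p f)) (fun _ => 0) = p ^ ((1 - (k : ZMod f)).val) := by
  haveI : Fact (1 < f) := ⟨hf⟩
  haveI : NeZero f := ⟨by omega⟩
  rw [eP]
  simp only [shift_apply]
  have hsum : ∀ c : Prop, ∀ hc : Decidable c,
      (if c then (∑ j ∈ Finset.range f, p ^ j * ((fun _ => (0:ℤ)) (j : ZMod f) - muT p f ((j:ZMod f) + k) ((fun _ => (0:ℤ)) (j : ZMod f)))) / 2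
       else (p ^ f - 1 + ∑ j ∈ Finset.range f, p ^ j * ((fun _ => (0:ℤ)) (j : ZMod f) - muT p f ((j:ZMod f) + k) ((fun _ => (0:ℤ)) (j : ZMod f)))) / 2)
      = (if c then (1 - p ^ f + p * p ^ ((-(k:ZMod f)).val) + p ^ ((1 - (k:ZMod f)).val)) / 2
         else (p ^ f - 1 + (1 - p ^ f + p * p ^ ((-(k:ZMod f)).val) + p ^ ((1 - (k:ZMod f)).val))) / 2) := by
    intro c hc
    rw [sumA p f hp]
  rw [hsum]
  by_cases hk1 : k = 1
  · subst hk1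
    rw [if_pos]
    · have hneg1 : ((-(1:ℕ) : ZMod f)).val = f - 1 := by
        have hcast : ((f - 1 : ℕ) : ZMod f) = -(1:ℕ) := by
          push_cast [Nat.cast_sub (by omega : 1 ≤ f)]
          simp
        rw [← hcast, ZMod.val_cast_of_lt (by omega)]
      rw [hneg1]
      have h10 : (1 - ((1:ℕ) : ZMod f)) = 0 := by push_cast; ring
      rw [h10]
      have hpf : p * p ^ (f - 1) = p ^ f := by
        rw [← pow_succ']
        congr 1
        omega
      rw [hpf]
      norm_num [ZMod.val_zero]
    · right
      rw [shift_apply, muT_eq_iff p f hp]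
      push_cast
      ring
  · have hk1' : ((k : ℕ) : ZMod f) ≠ 1 := by
      intro h
      apply hk1
      have := congrArg ZMod.val h
      rwa [ZMod.val_cast_of_lt hk, ZMod.val_one] at this
    rw [if_neg]
    · have hv0 : (-(k : ZMod f)).val ≠ f - 1 := by
        intro h
        apply hk1'
        have h2 : (-(k : ZMod f)) = -1 := by
          apply ZMod.val_injective
          rw [h]
          have hcast : ((f - 1 : ℕ) : ZMod f) = -1 := by
            push_cast [Nat.cast_sub (by omega : 1 ≤ f)]
            simp
          rw [← hcast, ZMod.val_cast_of_lt (by omega)]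
        exact neg_injective h2
      have hvlt : (-(k : ZMod f)).val < f - 1 := by
        have := ZMod.val_lt (-(k : ZMod f))
        omega
      have h1k : (1 - (k : ZMod f)) = (-(k : ZMod f)) + 1 := by ring
      have hval : (1 - (k : ZMod f)).val = (-(k : ZMod f)).val + 1 := by
        rw [h1k, ZMod.val_add_of_lt]
        · rw [ZMod.val_one]
        · rw [ZMod.val_one]
          omega
      rw [hval, pow_succ]
      have harith : p ^ f - 1 + (1 - p ^ f + p * p ^ ((-(k : ZMod f)).val)
          + p ^ ((-(k : ZMod f)).val) * p) = 2 * (p ^ ((-(k : ZMod f)).val) * p) := by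
        ring
      rw [harith, Int.mul_ediv_cancel_left _ (by norm_num)]
    · rintro (h | h)
      · rw [shift_apply] at h
        exact muT_ne_id p f hp _ h
      · rw [shift_apply, muT_eq_iff p f hp] at h
        apply hk1'
        linear_combination h

/-- for odd `f > 1`, the constant term `c` of
`e(g^{f-1}μ) + ⋯ + e(gμ) + e(μ)` (its value at `x = 0`) satisfies
`c ≡ (pᶠ - 1)/(p - 1) = 1 + p + ⋯ + p^{f-1} (mod pᶠ - 1)`. -/
theorem constant_term_congruence (p : ℤ) (f : ℕ) (hf : 1 < f) (hodd : Odd f) (hp : 3 < p) :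
    (p ^ f - 1) ∣
      (∑ k ∈ Finset.range f, eP p f (shiftT^[k] (muT p f)) fun _ => 0)
        - ∑ i ∈ Finset.range f, p ^ i := by
  haveI : NeZero f := ⟨by omega⟩
  have h1 : (∑ k ∈ Finset.range f, eP p f (shiftT^[k] (muT p f)) fun _ => 0)
      = ∑ k ∈ Finset.range f, p ^ ((1 - (k : ZMod f)).val) :=
    Finset.sum_congr rfl fun k hk => key p f hf hp k (Finset.mem_range.mp hk)
  have h2 : (∑ k ∈ Finset.range f, p ^ ((1 - (k : ZMod f)).val))
      = ∑ i ∈ Finset.range f, p ^ i := by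
    refine Finset.sum_nbij' (fun k => ((1 - (k : ZMod f)).val))
      (fun m => ((1 - (m : ZMod f)).val)) ?_ ?_ ?_ ?_ ?_
    · intro a _
      exact Finset.mem_range.mpr (ZMod.val_lt _)
    · intro a _
      exact Finset.mem_range.mpr (ZMod.val_lt _)
    · intro a ha
      show (1 - (((1 - (a : ZMod f)).val : ℕ) : ZMod f)).val = a
      rw [ZMod.natCast_rightInverse]
      have : (1 - (1 - (a : ZMod f))) = (a : ZMod f) := by ring
      rw [this, ZMod.val_cast_of_lt (Finset.mem_range.mp ha)]
    · intro a ha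
      show (1 - (((1 - (a : ZMod f)).val : ℕ) : ZMod f)).val = a
      rw [ZMod.natCast_rightInverse]
      have : (1 - (1 - (a : ZMod f))) = (a : ZMod f) := by ring
      rw [this, ZMod.val_cast_of_lt (Finset.mem_range.mp ha)]
    · intro a _
      rfl
  rw [h1, h2, sub_self]
  exact dvd_zero _
end

section
/- Let $f > 1$ be even and $p > 3$, and let $1 \le r_j \le p-3$ for all $j$. For each $1 \le k \le 2f$, let $\sigma_k$ denote the weight parameter $\bm\mu^{(k)}(\bm r) \in \{0, \ldots, p-1\}^f$ and define the involution $\bm s \mapsto \bm s^{[s]}$ on tuples by $(s_0, \ldots, s_{f-1})^{[s]} = (p-1-s_0, \ldots, p-1-s_{f-1})$. Then $\bm\mu^{(k)}(\bm r) \ne (\bm\mu^{(k+f)}(\bm r))^{[s]}$ for all $1 \le k \le f$. -/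
/-! Follow one coordinate through a full period of `f` steps. Choosing the coordinate `j = 1 - k`,
the steps `k + 1, …, k + f` of `μ⁽ᵏ⁺ᶠ⁾` apply the entries of `μ` at positions `1, 2, …, f - 1, 0`
in turn: first `x ↦ p - 2 - x`, then `f - 2` copies of `x ↦ p - 1 - x`, which cancel in pairs
since `f` is even, and finally `x ↦ x - 1`. So `μ⁽ᵏ⁺ᶠ⁾_j(r) = p - 3 - μ⁽ᵏ⁾_j(r)`, and the involution
sends it to `μ⁽ᵏ⁾_j(r) + 2 ≠ μ⁽ᵏ⁾_j(r)`. -/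

lemma shiftT_iterate_apply {f : ℕ} (n : ℕ) (lam : ZMod f → ℤ → ℤ) (j : ZMod f) :
    (shiftT^[n] lam) j = lam (j + n) := by
  induction n generalizing lam j with
  | zero => simp
  | succ n ih =>
    rw [Function.iterate_succ_apply, ih, shiftT]
    push_cast
    ring_nf

lemma muT_natCast_of_two_le_of_lt {p : ℤ} {f n : ℕ} (h2 : 2 ≤ n) (hn : n < f) (x : ℤ) :
    muT p f n x = p - 1 - x := by
  have : NeZero f := ⟨by omega⟩
  have hval : (n : ZMod f).val = n := ZMod.val_natCast_of_lt hn
  have h0 : (n : ZMod f) ≠ 0 := fun h => by rw [h, ZMod.val_zero] at hval; omega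
  have h1 : (n : ZMod f) ≠ 1 := fun h => by
    have : Fact (1 < f) := ⟨by omega⟩
    rw [h, ZMod.val_one] at hval; omega
  simp [muT, h0, h1]

namespace muIter

variable {p : ℤ} {f : ℕ}

lemma succ_apply (n : ℕ) (j : ZMod f) (x : ℤ) :
    muIter p f (n + 1) j x = muT p f (j + n) (muIter p f n j x) := by
  simp only [muIter, shiftT_iterate_apply]

lemma add_apply (k m : ℕ) (j : ZMod f) (x : ℤ) :
    muIter p f (k + m) j x = muIter p f m (j + k) (muIter p f k j x) := by
  induction m with
  | zero => rfl
  | succ m ih =>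
    rw [← add_assoc, succ_apply, succ_apply, ih]
    push_cast
    ring_nf

lemma odd_apply_one {m : ℕ} (hm : 2 * m + 1 < f) (x : ℤ) :
    muIter p f (2 * m + 1) 1 x = p - 2 - x := by
  induction m with
  | zero =>
    have : Fact (1 < f) := ⟨by omega⟩
    simp [muIter, muT]
  | succ m ih =>
    rw [show 2 * (m + 1) + 1 = 2 * m + 1 + 1 + 1 by ring, succ_apply, succ_apply, ih (by omega),
      show (1 : ZMod f) + ((2 * m + 1 + 1 : ℕ) : ZMod f) = ((2 * m + 3 : ℕ) : ZMod f) by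
        push_cast; ring,
      show (1 : ZMod f) + ((2 * m + 1 : ℕ) : ZMod f) = ((2 * m + 2 : ℕ) : ZMod f) by
        push_cast; ring,
      muT_natCast_of_two_le_of_lt (by omega) (by omega),
      muT_natCast_of_two_le_of_lt (by omega) (by omega)]
    ring

lemma self_apply_one_of_even (hf : 1 < f) (heven : Even f) (x : ℤ) :
    muIter p f f 1 x = p - 3 - x := by
  obtain ⟨m, hm⟩ : ∃ m, f = 2 * m + 1 + 1 := ⟨f / 2 - 1, by obtain ⟨n, rfl⟩ := heven; omega⟩
  have hlast : (1 : ZMod f) + ((2 * m + 1 : ℕ) : ZMod f) = 0 := by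
    rw [← ZMod.natCast_self f, hm]
    push_cast
    ring
  calc muIter p f f 1 x = muIter p f (2 * m + 1 + 1) 1 x := by rw [← hm]
    _ = p - 3 - x := by
      rw [succ_apply, hlast, odd_apply_one (by omega), muT, if_pos rfl]
      ring

end muIter

theorem muIter_eval_ne_involution_general (p : ℤ) (f : ℕ) (hf : 1 < f) (heven : Even f)
    (r : ZMod f → ℤ) :
    ∀ k : ℕ, 1 ≤ k → k ≤ f →
      (fun j : ZMod f => muIter p f k j (r j))
        ≠ fun j : ZMod f => p - 1 - muIter p f (k + f) j (r j) := by
  intro k _ _ h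
  have hj := congrFun h (1 - k)
  rw [muIter.add_apply, sub_add_cancel, muIter.self_apply_one_of_even hf heven] at hj
  omega

/-- for even `f > 1` and `1 ≤ rⱼ ≤ p - 3`, the evaluated tuple `μ⁽ᵏ⁾(r)` is not
the image of `μ⁽ᵏ⁺ᶠ⁾(r)` under the involution `s ↦ (p-1-s₀, …, p-1-s_{f-1})`, for `1 ≤ k ≤ f`. -/
theorem muIter_eval_ne_involution (p : ℤ) (f : ℕ) (hf : 1 < f) (heven : Even f) (hp : 3 < p)
    (r : ZMod f → ℤ) (hr : ∀ j, 1 ≤ r j ∧ r j ≤ p - 3) :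
    ∀ k : ℕ, 1 ≤ k → k ≤ f →
      (fun j : ZMod f => muIter p f k j (r j))
        ≠ fun j : ZMod f => p - 1 - muIter p f (k + f) j (r j) :=
  muIter_eval_ne_involution_general p f hf heven r
end
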